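/- arXiv:2605.11503 — 2 statements merged into one kernel-verified Lean document; each statement's English description precedes it below -/
import Mathlib

section
/- Let G' = (P ∪ B, E) be a finite galactic graph with a black hole b ∈ B, and let S, T ⊆ P with |S| = |T| = n and no black hole in N[S ∪ T]. Suppose there is a plan for Galactic 1IUMAPF from S to T in G'. Then there is a plan Q'_0, …, Q'_{ℓ'} from S to T in G' satisfying both: (1) no two consecutive configurations both have an agent in N(b); and (2) for every step t ∈ [1, ℓ'], |S^pro_t| + |S^abs_t| ≤ 1, where S^pro_t = {i : Q'_{t-1}[i] = b and Q'_t[i] ≠ b} is the set of agents leaving b at step t and S^abs_t = {i : Q'_t[i] = b and Q'_{t-1}[i] ≠ b} is the set of agents entering b at step t. -/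
open SimpleGraph

/-- A configuration of `n` agents is distance-`r` independent if distinct agents are
at graph distance at least `r + 1`. A plan for `rIUMAPF` of length `ℓ` from `S` to `T`:
the occupied sets at times `0` and `ℓ` are `S` and `T`, every configuration up to time `ℓ`
is distance-`r` independent, and each agent moves within closed neighborhoods. -/
def IsPlan {V : Type*} (G : SimpleGraph V) (r n ℓ : ℕ) (Q : ℕ → Fin n → V)
    (S T : Set V) : Prop :=
  Set.range (Q 0) = S ∧ Set.range (Q ℓ) = T ∧
  (∀ k ≤ ℓ, ∀ i j : Fin n, i ≠ j → r + 1 ≤ G.dist (Q k i) (Q k j)) ∧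
  (∀ k < ℓ, ∀ i : Fin n, Q (k + 1) i = Q k i ∨ G.Adj (Q k i) (Q (k + 1) i))

/-- Galactic distance-`r` independence: no two distinct agents on planets are within
distance `r` in the planet-induced subgraph (`edist = ⊤` when unreachable). -/
def GalIndep {V : Type*} (G : SimpleGraph V) (P : Set V) (r : ℕ) {n : ℕ}
    (Q : Fin n → V) : Prop :=
  ∀ i j : Fin n, i ≠ j → ∀ (hi : Q i ∈ P) (hj : Q j ∈ P),
    (r : ℕ∞) < (G.induce P).edist ⟨Q i, hi⟩ ⟨Q j, hj⟩

/-- A plan for Galactic `rIUMAPF` from `S` to `T`. -/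
def GalPlan {V : Type*} (G : SimpleGraph V) (P : Set V) (r n : ℕ)
    (S T : Set V) : Prop :=
  ∃ (ℓ : ℕ) (Q : ℕ → Fin n → V),
    Set.range (Q 0) = S ∧ Set.range (Q ℓ) = T ∧
    (∀ k ≤ ℓ, GalIndep G P r (Q k)) ∧
    (∀ k < ℓ, ∀ i : Fin n, Q (k + 1) i = Q k i ∨ G.Adj (Q k i) (Q (k + 1) i))

/-- Closed neighborhood `N[X]` of a set of vertices. -/
def nclSet {V : Type*} (G : SimpleGraph V) (X : Set V) : Set V :=
  X ∪ {v | ∃ u ∈ X, G.Adj u v}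

/-- Contraction of a vertex set `W` to a single new vertex (`Sum.inr ()`), which is
adjacent exactly to the vertices of `N(W) ∖ W`; everything else is unchanged. -/
def contractSet {V : Type*} (G : SimpleGraph V) (W : Set V) :
    SimpleGraph ({v : V // v ∉ W} ⊕ Unit) where
  Adj x y :=
    match x, y with
    | Sum.inl u, Sum.inl v => G.Adj u.1 v.1
    | Sum.inl u, Sum.inr _ => ∃ w ∈ W, G.Adj u.1 w
    | Sum.inr _, Sum.inl v => ∃ w ∈ W, G.Adj v.1 w
    | Sum.inr _, Sum.inr _ => False
  symm := by
    constructor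
    rintro (u | u) (v | v) h
    · exact h.symm
    · exact h
    · exact h
    · exact h
  loopless := by
    constructor
    rintro (u | u) h
    · exact G.loopless.irrefl u.1 h
    · exact h

/-- The planets of the contracted galactic graph: the surviving copies of planets. -/
def contractPlanets {V : Type*} (P W : Set V) : Set ({v : V // v ∉ W} ⊕ Unit) :=
  {x | ∃ u : {v : V // v ∉ W}, u.1 ∈ P ∧ x = Sum.inl u}

/-- A subset of `V ∖ W` viewed inside the contracted vertex set. -/
def liftSet {V : Type*} (W X : Set V) : Set ({v : V // v ∉ W} ⊕ Unit) :=
  {x | ∃ u : {v : V // v ∉ W}, u.1 ∈ X ∧ x = Sum.inl u}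

/-- The infinite grid graph on `ℤ × ℤ`: adjacency is unit `L1` distance. -/
def gridGraph : SimpleGraph (ℤ × ℤ) where
  Adj p q := |p.1 - q.1| + |p.2 - q.2| = 1
  symm := by
    constructor
    intro p q h
    rw [abs_sub_comm q.1, abs_sub_comm q.2]
    exact h
  loopless := by
    constructor
    intro p h
    simp at h

/-!
Fold every configuration of the given plan by parking all agents of `N[b]` inside the black
hole `b`; parked agents impose no independence constraint, and the folded endpoints are `S`
and `T` because `N[b]` meets neither. One step `q → q'` of the plan is then replayed between
the folded configurations so that each replayed step has a side clear of `N(b)`: the agents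
entering `N[b]` dive into `b` one at a time (move to `q'`, the diver steps into `b` while
everyone else moves back to `q`), then the remaining agents make the move `q → q'`, and
finally the agents leaving `N[b]` surface one at a time, which is the same procedure run
backwards.
-/

open Relation Finset

theorem Relation.ReflTransGen.exists_seq {α : Type*} {r : α → α → Prop} {a c : α}
    (h : ReflTransGen r a c) :
    ∃ (m : ℕ) (f : ℕ → α), f 0 = a ∧ f m = c ∧ ∀ k < m, r (f k) (f (k + 1)) := by
  induction h with
  | refl => exact ⟨0, fun _ => a, rfl, rfl, by simp⟩
  | @tail c d _ hcd ih =>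
    obtain ⟨m, f, h0, hm, hf⟩ := ih
    refine ⟨m + 1, fun k => if k ≤ m then f k else d, by simpa using h0, by simp, ?_⟩
    intro k hk
    rcases (Nat.lt_succ_iff.mp hk).lt_or_eq with hk | rfl
    · simpa [hk.le, Nat.succ_le_of_lt hk] using hf k hk
    · simpa [hm] using hcd

theorem Relation.reflTransGen_of_forall_lt {α : Type*} {r : α → α → Prop} {f : ℕ → α} {ℓ : ℕ}
    (h : ∀ k < ℓ, ReflTransGen r (f k) (f (k + 1))) : ReflTransGen r (f 0) (f ℓ) := by
  induction ℓ with
  | zero => rfl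
  | succ ℓ ih => exact (ih fun k hk => h k (by omega)).trans (h ℓ ℓ.lt_succ_self)

theorem Relation.reflTransGen_union_of_forall_insert {α ι : Type*} [DecidableEq ι]
    {r : α → α → Prop} {f : Finset ι → α} (J s₀ : Finset ι)
    (h : ∀ s, s₀ ⊆ s → ∀ a ∈ J, ReflTransGen r (f s) (f (insert a s))) :
    ReflTransGen r (f s₀) (f (s₀ ∪ J)) := by
  induction J using Finset.induction_on generalizing s₀ with
  | empty => simpa using ReflTransGen.refl
  | insert a J _ ih =>
    rw [union_insert, ← insert_union]
    refine (h s₀ subset_rfl a (mem_insert_self a J)).trans (ih _ fun s hs c hc => ?_)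
    exact h s ((subset_insert a s₀).trans hs) c (mem_insert_of_mem hc)

section BlackHole

variable {V : Type*} {n : ℕ} {G : SimpleGraph V} {P : Set V} {r : ℕ} {b : V}

def IsMove (G : SimpleGraph V) (x y : Fin n → V) : Prop :=
  ∀ i, y i = x i ∨ G.Adj (x i) (y i)

theorem IsMove.symm {x y : Fin n → V} (h : IsMove G x y) : IsMove G y x := fun i =>
  (h i).imp Eq.symm fun h => h.symm

structure TameStep (G : SimpleGraph V) (P : Set V) (r : ℕ) (b : V) (x y : Fin n → V) :
    Prop where
  indep_left : GalIndep G P r x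
  indep_right : GalIndep G P r y
  move : IsMove G x y
  transfer : {i : Fin n | x i = b ∧ y i ≠ b}.ncard + {i : Fin n | y i = b ∧ x i ≠ b}.ncard ≤ 1
  clear : Set.range x ∩ G.neighborSet b = ∅ ∨ Set.range y ∩ G.neighborSet b = ∅

theorem TameStep.symm {x y : Fin n → V} (h : TameStep G P r b x y) : TameStep G P r b y x :=
  ⟨h.indep_right, h.indep_left, h.move.symm, by rw [add_comm]; exact h.transfer, h.clear.symm⟩

instance : Std.Symm (TameStep G P r b (n := n)) := ⟨fun _ _ => TameStep.symm⟩

def park (b : V) (s : Finset (Fin n)) (q : Fin n → V) : Fin n → V :=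
  fun i => if i ∈ s then b else q i

section Park

variable {s : Finset (Fin n)} {q : Fin n → V} {i : Fin n}

@[simp] theorem park_of_mem (h : i ∈ s) : park b s q i = b := if_pos h

@[simp] theorem park_of_notMem (h : i ∉ s) : park b s q i = q i := if_neg h

@[simp] theorem park_empty : park b ∅ q = q := rfl

theorem park_eq_iff_mem (h : ∀ i ∉ s, q i ≠ b) (i : Fin n) : park b s q i = b ↔ i ∈ s := by
  by_cases hi : i ∈ s <;> simp [hi, h i]

theorem galIndep_park (hb : b ∉ P) (h : GalIndep G P r q) (s : Finset (Fin n)) :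
    GalIndep G P r (park b s q) := by
  intro i j hij hi hj
  have unparked : ∀ k, park b s q k ∈ P → k ∉ s := fun k hk hks => hb (by simpa [hks] using hk)
  simp only [park_of_notMem (unparked i hi), park_of_notMem (unparked j hj)]
  exact h i j hij _ _

theorem range_park_inter_neighborSet (h : ∀ i ∉ s, ¬G.Adj b (q i)) :
    Set.range (park b s q) ∩ G.neighborSet b = ∅ := by
  refine Set.eq_empty_iff_forall_notMem.mpr ?_
  rintro _ ⟨⟨i, rfl⟩, hi⟩
  by_cases hs : i ∈ s
  · simp [hs] at hi
  · exact h i hs (by simpa [hs] using hi)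

end Park

theorem tameStep_park {x y : Fin n → V} {s t : Finset (Fin n)} (hb : b ∉ P)
    (hxy : IsMove G x y) (hx : GalIndep G P r x) (hy : GalIndep G P r y)
    (hx_b : ∀ i ∉ s, x i ≠ b) (hy_b : ∀ i ∉ t, y i ≠ b)
    (hleave : ∀ i ∈ s \ t, G.Adj b (y i)) (henter : ∀ i ∈ t \ s, G.Adj (x i) b)
    (hcard : #(s \ t) + #(t \ s) ≤ 1)
    (hclear : (∀ i ∉ s, ¬G.Adj b (x i)) ∨ (∀ i ∉ t, ¬G.Adj b (y i))) :
    TameStep G P r b (park b s x) (park b t y) := by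
  refine ⟨galIndep_park hb hx s, galIndep_park hb hy t, fun i => ?_, ?_, ?_⟩
  · by_cases hs : i ∈ s <;> by_cases ht : i ∈ t
    · simp [hs, ht]
    · simpa [hs, ht] using Or.inr (hleave i (mem_sdiff.2 ⟨hs, ht⟩))
    · simpa [hs, ht] using Or.inr (henter i (mem_sdiff.2 ⟨ht, hs⟩))
    · simpa [hs, ht] using hxy i
  · have transfers (u v : Finset (Fin n)) : {i | i ∈ u ∧ i ∉ v} = ↑(u \ v) := by ext; simp
    simpa only [ne_eq, park_eq_iff_mem hx_b, park_eq_iff_mem hy_b, transfers,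
      Set.ncard_coe_finset] using hcard
  · exact hclear.imp range_park_inter_neighborSet range_park_inter_neighborSet

open Classical in
noncomputable def nearAgents (G : SimpleGraph V) (b : V) (q : Fin n → V) : Finset (Fin n) :=
  {i | q i = b ∨ G.Adj b (q i)}

theorem mem_nearAgents {q : Fin n → V} {i : Fin n} :
    i ∈ nearAgents G b q ↔ q i = b ∨ G.Adj b (q i) := by
  simp [nearAgents]

theorem nearAgents_eq_empty {q : Fin n → V} {X : Set V} (hb : b ∉ P) (hX : nclSet G X ⊆ P)
    (hq : Set.range q ⊆ X) : nearAgents G b q = ∅ := by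
  refine eq_empty_of_forall_notMem fun i hi => hb (hX ?_)
  have hqi : q i ∈ X := hq (Set.mem_range_self i)
  rcases mem_nearAgents.mp hi with h | h
  · exact Or.inl (h ▸ hqi)
  · exact Or.inr ⟨q i, hqi, h.symm⟩

theorem IsMove.mem_nearAgents_of_eq {x y : Fin n → V} {i : Fin n} (h : IsMove G x y)
    (hi : y i = b) : i ∈ nearAgents G b x :=
  mem_nearAgents.mpr <| (h i).imp (fun h' => h'.symm.trans hi) fun h' => by
    rwa [hi, G.adj_comm] at h'

section Block

variable {q q' : Fin n → V} {s : Finset (Fin n)}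

theorem tameStep_park_of_subset (hb : b ∉ P) (hmv : IsMove G q q') (hq : GalIndep G P r q)
    (hq' : GalIndep G P r q') (hs : nearAgents G b q ⊆ s) :
    TameStep G P r b (park b s q) (park b s q') :=
  tameStep_park hb hmv hq hq' (fun i hi h => hi (hs (mem_nearAgents.mpr (Or.inl h))))
    (fun i hi h => hi (hs (hmv.mem_nearAgents_of_eq h))) (by simp) (by simp) (by simp)
    (Or.inl fun i hi h => hi (hs (mem_nearAgents.mpr (Or.inr h))))

theorem reflTransGen_park_insert (hb : b ∉ P) (hmv : IsMove G q q') (hq : GalIndep G P r q)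
    (hq' : GalIndep G P r q') (hs : nearAgents G b q ⊆ s) {a : Fin n}
    (ha : a ∈ nearAgents G b q' \ nearAgents G b q) :
    ReflTransGen (TameStep G P r b) (park b s q) (park b (insert a s) q) := by
  obtain ⟨ha', ha⟩ := mem_sdiff.mp ha
  have hq'a : G.Adj (q' a) b := by
    refine ((mem_nearAgents.mp ha').resolve_left fun h => ha ?_).symm
    exact hmv.mem_nearAgents_of_eq h
  have hs_sdiff : s \ insert a s = ∅ := sdiff_eq_empty_iff_subset.mpr (subset_insert a s)
  have eq_of_mem : ∀ i ∈ insert a s \ s, i = a := fun i hi =>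
    (mem_insert.mp (mem_sdiff.mp hi).1).resolve_right (mem_sdiff.mp hi).2
  refine .tail (.single (tameStep_park_of_subset hb hmv hq hq' hs)) ?_
  refine tameStep_park hb hmv.symm hq' hq (fun i hi h => hi (hs (hmv.mem_nearAgents_of_eq h)))
    (fun i hi h => hi (mem_insert_of_mem (hs (mem_nearAgents.mpr (Or.inl h)))))
    (by simp [hs_sdiff]) (fun i hi => eq_of_mem i hi ▸ hq'a) ?_
    (Or.inr fun i hi h => hi (mem_insert_of_mem (hs (mem_nearAgents.mpr (Or.inr h)))))
  rw [hs_sdiff, card_empty, zero_add]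
  exact card_le_one.mpr fun i hi j hj => (eq_of_mem i hi).trans (eq_of_mem j hj).symm

theorem reflTransGen_park_nearAgents (hb : b ∉ P) (hmv : IsMove G q q')
    (hq : GalIndep G P r q) (hq' : GalIndep G P r q') :
    ReflTransGen (TameStep G P r b) (park b (nearAgents G b q) q)
      (park b (nearAgents G b q') q') := by
  have dive : ∀ {x y : Fin n → V}, IsMove G x y → GalIndep G P r x → GalIndep G P r y →
      ReflTransGen (TameStep G P r b) (park b (nearAgents G b x) x)
        (park b (nearAgents G b x ∪ nearAgents G b y) x) := fun hxy hx hy => by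
    rw [← union_sdiff_self_eq_union]
    exact reflTransGen_union_of_forall_insert _ _ fun s hs a ha =>
      reflTransGen_park_insert hb hxy hx hy hs ha
  have move := tameStep_park_of_subset hb hmv hq hq' (subset_union_left (s₂ := nearAgents G b q'))
  refine ((dive hmv hq hq').tail move).trans ?_
  rw [union_comm]
  exact Std.Symm.symm _ _ (dive hmv.symm hq' hq)

end Block

end BlackHole

theorem exists_plan_nbhd_alternating_single_transfer_general {V : Type*}
    (G : SimpleGraph V) (P : Set V) (b : V) (hb : b ∉ P)
    (n : ℕ) (S T : Set V)
    (hbh : nclSet G (S ∪ T) ⊆ P)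
    (hplan : GalPlan G P 1 n S T) :
    ∃ (ℓ : ℕ) (Q : ℕ → Fin n → V),
      (Set.range (Q 0) = S ∧ Set.range (Q ℓ) = T ∧
        (∀ k ≤ ℓ, GalIndep G P 1 (Q k)) ∧
        (∀ k < ℓ, ∀ i : Fin n, Q (k + 1) i = Q k i ∨ G.Adj (Q k i) (Q (k + 1) i))) ∧
      (∀ t < ℓ, Set.range (Q t) ∩ G.neighborSet b = ∅ ∨
        Set.range (Q (t + 1)) ∩ G.neighborSet b = ∅) ∧
      (∀ t, 1 ≤ t → t ≤ ℓ →
        {i : Fin n | Q (t - 1) i = b ∧ Q t i ≠ b}.ncard +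
          {i : Fin n | Q t i = b ∧ Q (t - 1) i ≠ b}.ncard ≤ 1) := by
  obtain ⟨ℓ, Q, hQ0, hQℓ, hind, hmv⟩ := hplan
  have hreach : ReflTransGen (TameStep G P 1 b) (Q 0) (Q ℓ) := by
    have h := reflTransGen_of_forall_lt (f := fun k => park b (nearAgents G b (Q k)) (Q k))
      fun k hk => reflTransGen_park_nearAgents hb (hmv k hk) (hind k hk.le) (hind (k + 1) hk)
    rwa [nearAgents_eq_empty hb hbh (hQ0.subset.trans Set.subset_union_left),
      nearAgents_eq_empty hb hbh (hQℓ.subset.trans Set.subset_union_right), park_empty,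
      park_empty] at h
  obtain ⟨m, f, hf0, hfm, hf⟩ := hreach.exists_seq
  refine ⟨m, f, ⟨hf0 ▸ hQ0, hfm ▸ hQℓ, ?_, fun k hk => (hf k hk).move⟩,
    fun k hk => (hf k hk).clear, ?_⟩
  · rintro (_ | k) hk
    exacts [hf0 ▸ hind 0 (Nat.zero_le ℓ), (hf k hk).indep_right]
  · rintro (_ | t) _ ht
    · omega
    · simpa using (hf t ht).transfer

/-- any feasible instance of Galactic 1IUMAPF with a black hole `b` admits a
plan in which (1) no two consecutive configurations both place an agent in `N(b)`, and
(2) at every step at most one agent in total leaves or enters `b`. -/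
theorem exists_plan_nbhd_alternating_single_transfer {V : Type*} [Fintype V]
    (G : SimpleGraph V) (P : Set V) (b : V) (hb : b ∉ P)
    (n : ℕ) (S T : Set V) (hSP : S ⊆ P) (hTP : T ⊆ P)
    (hS : S.ncard = n) (hT : T.ncard = n)
    (hbh : nclSet G (S ∪ T) ⊆ P)
    (hplan : GalPlan G P 1 n S T) :
    ∃ (ℓ : ℕ) (Q : ℕ → Fin n → V),
      (Set.range (Q 0) = S ∧ Set.range (Q ℓ) = T ∧
        (∀ k ≤ ℓ, GalIndep G P 1 (Q k)) ∧
        (∀ k < ℓ, ∀ i : Fin n, Q (k + 1) i = Q k i ∨ G.Adj (Q k i) (Q (k + 1) i))) ∧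
      (∀ t < ℓ, Set.range (Q t) ∩ G.neighborSet b = ∅ ∨
        Set.range (Q (t + 1)) ∩ G.neighborSet b = ∅) ∧
      (∀ t, 1 ≤ t → t ≤ ℓ →
        {i : Fin n | Q (t - 1) i = b ∧ Q t i ≠ b}.ncard +
          {i : Fin n | Q t i = b ∧ Q (t - 1) i ≠ b}.ncard ≤ 1) :=
  exists_plan_nbhd_alternating_single_transfer_general G P b hb n S T hbh hplan
end

section
/- Let G = (V,E) be a finite simple connected graph, r ∈ ℕ, S, T ⊆ V with |S| = |T| = n, and τ ∈ ℕ. Then there exists a plan for rIUMAPF from S to T of length exactly τ if and only if there exist functions x : V × {0,…,τ} → {0,1} and f : V × V × {0,…,τ−1} → {0,1} satisfying: (i) x_{v,0} = 1 iff v ∈ S, and x_{v,τ} = 1 iff v ∈ T; (ii) f_{u,v,t} = 0 whenever v ∉ N[u]; (iii) for every t ∈ {0,…,τ−1} and u ∈ V, Σ_{v ∈ N[u]} f_{u,v,t} = x_{u,t}; (iv) for every t ∈ {1,…,τ} and u ∈ V, Σ_{v ∈ N[u]} f_{v,u,t−1} = x_{u,t}; (v) for every t ∈ {0,…,τ} and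 every pair of distinct vertices u, v with dist_G(u,v) ≤ r, x_{u,t} + x_{v,t} ≤ 1. -/
open SimpleGraph

/-!
Given a plan, let `x v t` count the agents at `v` at time `t` and `f u v t` the agents moving
from `u` to `v` between `t` and `t + 1`. Both flow-conservation constraints are then fiberwise
counting, while distance-`r` independence makes every configuration injective, which gives the
`0/1` bounds and the packing constraint.

Conversely, every occupied vertex sends exactly one unit of flow into its closed neighbourhood;
moving each agent along it defines the plan. The in-flow constraint together with `x ≤ 1` shows
that the vertex reached is occupied and that no two agents reach the same vertex, so the
configurations stay injective; the agents end inside `T`, hence fill it since `|T| = n`.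
-/

open Finset SimpleGraph

section

variable {V : Type*}

section Counting

variable {ι : Type*} [Fintype ι] [DecidableEq V]

def agentCount (q : ι → V) (v : V) : ℕ := #{i | q i = v}

def transitCount (q q' : ι → V) (u v : V) : ℕ := #{i | q i = u ∧ q' i = v}

lemma transitCount_le_agentCount (q q' : ι → V) (u v : V) :
    transitCount q q' u v ≤ agentCount q u :=
  card_le_card (monotone_filter_right _ fun _ _ h => h.1)

lemma transitCount_eq_zero {q q' : ι → V} {u v : V} (h : ∀ i, q i = u → q' i ≠ v) :
    transitCount q q' u v = 0 :=
  card_eq_zero.2 (filter_eq_empty_iff.2 fun i _ hi => h i hi.1 hi.2)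

lemma sum_transitCount_right {q q' : ι → V} {u : V} {s : Finset V}
    (h : ∀ i, q i = u → q' i ∈ s) : ∑ v ∈ s, transitCount q q' u v = agentCount q u := by
  rw [agentCount, card_eq_sum_card_fiberwise fun i hi => h i (mem_filter.1 hi).2]
  simp only [transitCount, filter_filter]

lemma sum_transitCount_left {q q' : ι → V} {v : V} {s : Finset V}
    (h : ∀ i, q' i = v → q i ∈ s) : ∑ u ∈ s, transitCount q q' u v = agentCount q' v := by
  rw [agentCount, card_eq_sum_card_fiberwise fun i hi => h i (mem_filter.1 hi).2]
  simp only [transitCount, filter_filter, and_comm]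

lemma agentCount_eq_ite {q : ι → V} (hq : Function.Injective q) (v : V) :
    agentCount q v = if v ∈ Set.range q then 1 else 0 := by
  split_ifs with hv
  · obtain ⟨i, rfl⟩ := hv
    exact card_eq_one.2 ⟨i, by ext j; simp [hq.eq_iff]⟩
  · simpa [agentCount] using hv

lemma agentCount_le_one {q : ι → V} (hq : Function.Injective q) (v : V) :
    agentCount q v ≤ 1 := by
  rw [agentCount_eq_ite hq]
  split <;> omega

lemma agentCount_eq_one_iff {q : ι → V} (hq : Function.Injective q) {v : V} :
    agentCount q v = 1 ↔ v ∈ Set.range q := by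
  rw [agentCount_eq_ite hq]
  split <;> simp_all

end Counting

section Graph

variable [Fintype V] [DecidableEq V] {G : SimpleGraph V} [DecidableRel G.Adj] {u v : V}

lemma mem_insert_neighborFinset_iff :
    v ∈ insert u (G.neighborFinset u) ↔ v = u ∨ G.Adj u v := by
  simp

lemma mem_insert_neighborFinset_comm :
    v ∈ insert u (G.neighborFinset u) ↔ u ∈ insert v (G.neighborFinset v) := by
  simp [eq_comm, adj_comm]

end Graph

structure IsILPSolution [Fintype V] [DecidableEq V] (G : SimpleGraph V) [DecidableRel G.Adj]
    (r τ : ℕ) (S T : Set V) (x : V → ℕ → ℕ) (f : V → V → ℕ → ℕ) : Prop where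
  occupancy_le_one : ∀ v : V, ∀ t ≤ τ, x v t ≤ 1
  flow_le_one : ∀ u v : V, ∀ t < τ, f u v t ≤ 1
  occupancy_zero_eq_one_iff : ∀ v : V, x v 0 = 1 ↔ v ∈ S
  occupancy_final_eq_one_iff : ∀ v : V, x v τ = 1 ↔ v ∈ T
  flow_eq_zero : ∀ u v : V, ∀ t < τ, v ∉ insert u (G.neighborFinset u) → f u v t = 0
  sum_outflow : ∀ t < τ, ∀ u : V, ∑ v ∈ insert u (G.neighborFinset u), f u v t = x u t
  sum_inflow : ∀ t, 1 ≤ t → t ≤ τ → ∀ u : V,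
    ∑ v ∈ insert u (G.neighborFinset u), f v u (t - 1) = x u t
  occupancy_add_le_one :
    ∀ t ≤ τ, ∀ u v : V, u ≠ v → G.dist u v ≤ r → x u t + x v t ≤ 1

namespace IsPlan

variable {G : SimpleGraph V} {r n τ : ℕ} {Q : ℕ → Fin n → V} {S T : Set V}

lemma injective (hQ : IsPlan G r n τ Q S T) {k : ℕ} (hk : k ≤ τ) :
    Function.Injective (Q k) := by
  intro i j hij
  by_contra hne
  have := hQ.2.2.1 k hk i j hne
  rw [hij, dist_self] at this
  omega

variable [Fintype V] [DecidableEq V] [DecidableRel G.Adj]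

lemma mem_insert_neighborFinset (hQ : IsPlan G r n τ Q S T) {k : ℕ} (hk : k < τ) (i : Fin n) :
    Q (k + 1) i ∈ insert (Q k i) (G.neighborFinset (Q k i)) :=
  mem_insert_neighborFinset_iff.2 (hQ.2.2.2 k hk i)

theorem isILPSolution (hQ : IsPlan G r n τ Q S T) :
    IsILPSolution G r τ S T (fun v t => agentCount (Q t) v)
      (fun u v t => transitCount (Q t) (Q (t + 1)) u v) where
  occupancy_le_one v t ht := agentCount_le_one (hQ.injective ht) v
  flow_le_one u v t ht :=
    (transitCount_le_agentCount _ _ u v).trans (agentCount_le_one (hQ.injective ht.le) u)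
  occupancy_zero_eq_one_iff v := by
    rw [agentCount_eq_one_iff (hQ.injective (Nat.zero_le τ)), hQ.1]
  occupancy_final_eq_one_iff v := by
    rw [agentCount_eq_one_iff (hQ.injective le_rfl), hQ.2.1]
  flow_eq_zero u v t ht hv :=
    transitCount_eq_zero fun i hi hiv => hv (hi ▸ hiv ▸ hQ.mem_insert_neighborFinset ht i)
  sum_outflow t ht u :=
    sum_transitCount_right fun i hi => hi ▸ hQ.mem_insert_neighborFinset ht i
  sum_inflow t ht₁ htτ u := by
    obtain ⟨t, rfl⟩ := Nat.exists_eq_add_of_le' ht₁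
    exact sum_transitCount_left fun i hi =>
      mem_insert_neighborFinset_comm.1 (hi ▸ hQ.mem_insert_neighborFinset htτ i)
  occupancy_add_le_one t ht u v huv hdist := by
    simp only [agentCount_eq_ite (hQ.injective ht)]
    split_ifs with hu hv <;> try omega
    obtain ⟨⟨i, rfl⟩, ⟨j, rfl⟩⟩ := And.intro hu hv
    have := hQ.2.2.1 t ht i j (ne_of_apply_ne _ huv)
    omega

end IsPlan

lemma Set.exists_injective_range_eq_of_ncard_eq [Finite V] {S : Set V} {n : ℕ}
    (hS : S.ncard = n) : ∃ q : Fin n → V, Function.Injective q ∧ Set.range q = S := by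
  let e : Fin n ≃ S := (Finite.equivFinOfCardEq ((Nat.card_coe_set_eq S).trans hS)).symm
  refine ⟨Subtype.val ∘ e, Subtype.val_injective.comp e.injective, ?_⟩
  rw [Set.range_comp, e.range_eq_univ, Set.image_univ, Subtype.range_coe]

def trajectory (step : ℕ → V → V) (v : V) : ℕ → V
  | 0 => v
  | t + 1 => step t (trajectory step v t)

namespace IsILPSolution

variable [Fintype V] [DecidableEq V] {G : SimpleGraph V} [DecidableRel G.Adj]
  {r τ : ℕ} {S T : Set V} {x : V → ℕ → ℕ} {f : V → V → ℕ → ℕ}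
  (sol : IsILPSolution G r τ S T x f)
include sol

lemma sum_inflow_succ {t : ℕ} (ht : t < τ) (u : V) :
    ∑ w ∈ insert u (G.neighborFinset u), f w u t = x u (t + 1) :=
  sol.sum_inflow (t + 1) (Nat.le_add_left 1 t) ht u

lemma exists_flow_eq_one {t : ℕ} (ht : t < τ) {u : V} (hu : x u t = 1) :
    ∃ v ∈ insert u (G.neighborFinset u), f u v t = 1 := by
  have hsum := (sol.sum_outflow t ht u).trans hu
  obtain ⟨v, hv, hne⟩ := exists_ne_zero_of_sum_ne_zero (hsum ▸ one_ne_zero)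
  have hle : f u v t ≤ 1 :=
    hsum ▸ single_le_sum (f := fun w => f u w t) (fun _ _ => Nat.zero_le _) hv
  exact ⟨v, hv, by omega⟩

lemma occupancy_succ_eq_one_of_flow_eq_one {t : ℕ} (ht : t < τ) {u v : V}
    (hv : v ∈ insert u (G.neighborFinset u)) (hf : f u v t = 1) : x v (t + 1) = 1 := by
  have hle : f u v t ≤ x v (t + 1) := sol.sum_inflow_succ ht v ▸
    single_le_sum (f := fun w => f w v t) (fun _ _ => Nat.zero_le _)
      (mem_insert_neighborFinset_comm.1 hv)
  have := sol.occupancy_le_one v (t + 1) ht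
  omega

lemma eq_of_flow_eq_one {t : ℕ} (ht : t < τ) {u u' v : V}
    (hv : v ∈ insert u (G.neighborFinset u)) (hv' : v ∈ insert u' (G.neighborFinset u'))
    (hf : f u v t = 1) (hf' : f u' v t = 1) : u = u' := by
  by_contra hne
  have hle : f u v t + f u' v t ≤ x v (t + 1) := sol.sum_inflow_succ ht v ▸
    add_le_sum (f := fun w => f w v t) (fun _ _ => Nat.zero_le _)
      (mem_insert_neighborFinset_comm.1 hv) (mem_insert_neighborFinset_comm.1 hv') hne
  have := sol.occupancy_le_one v (t + 1) ht
  omega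

section Trajectory

variable {step : ℕ → V → V}
  (hstep : ∀ t < τ, ∀ u, x u t = 1 →
    step t u ∈ insert u (G.neighborFinset u) ∧ f u (step t u) t = 1)
include hstep

lemma occupancy_trajectory_eq_one {v : V} (hv : x v 0 = 1) :
    ∀ t ≤ τ, x (trajectory step v t) t = 1
  | 0, _ => hv
  | t + 1, ht =>
    have hocc := occupancy_trajectory_eq_one hv t (Nat.le_of_succ_le ht)
    sol.occupancy_succ_eq_one_of_flow_eq_one ht (hstep t ht _ hocc).1 (hstep t ht _ hocc).2

lemma injective_trajectory {n : ℕ} {q : Fin n → V} (hq : Function.Injective q)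
    (hqS : ∀ i, q i ∈ S) : ∀ t ≤ τ, Function.Injective fun i => trajectory step (q i) t
  | 0, _ => hq
  | t + 1, ht => by
    intro i j hij
    have hocc k := sol.occupancy_trajectory_eq_one hstep
      ((sol.occupancy_zero_eq_one_iff (q k)).2 (hqS k)) t (Nat.le_of_succ_le ht)
    obtain ⟨hmemi, hfi⟩ := hstep t ht _ (hocc i)
    obtain ⟨hmemj, hfj⟩ := hstep t ht _ (hocc j)
    change step t _ = step t _ at hij
    rw [← hij] at hmemj hfj
    exact injective_trajectory hq hqS t (Nat.le_of_succ_le ht)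
      (sol.eq_of_flow_eq_one ht hmemi hmemj hfi hfj)

theorem isPlan_trajectory {n : ℕ} (hT : T.ncard = n) {q : Fin n → V}
    (hq : Function.Injective q) (hqS : Set.range q = S) :
    IsPlan G r n τ (fun t i => trajectory step (q i) t) S T := by
  have hqS' : ∀ i, q i ∈ S := fun i => hqS ▸ Set.mem_range_self i
  have hocc : ∀ t ≤ τ, ∀ i, x (trajectory step (q i) t) t = 1 := fun t ht i =>
    sol.occupancy_trajectory_eq_one hstep ((sol.occupancy_zero_eq_one_iff _).2 (hqS' i)) t ht
  have hinj := sol.injective_trajectory hstep hq hqS'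
  refine ⟨hqS, ?_, ?_, ?_⟩
  · refine Set.eq_of_subset_of_ncard_le ?_ ?_
    · rintro _ ⟨i, rfl⟩
      exact (sol.occupancy_final_eq_one_iff _).1 (hocc τ le_rfl i)
    · rw [hT, Set.ncard_range_of_injective (hinj τ le_rfl), Nat.card_fin]
  · intro k hk i j hij
    by_contra hlt
    have := sol.occupancy_add_le_one k hk _ _ ((hinj k hk).ne hij)
      (Nat.lt_succ_iff.1 (not_le.1 hlt))
    rw [hocc k hk i, hocc k hk j] at this
    omega
  · intro k hk i
    exact mem_insert_neighborFinset_iff.1 (hstep k hk _ (hocc k hk.le i)).1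

end Trajectory

theorem exists_isPlan {n : ℕ} (hS : S.ncard = n) (hT : T.ncard = n) :
    ∃ Q, IsPlan G r n τ Q S T := by
  have : ∀ t u, ∃ v, t < τ → x u t = 1 →
      v ∈ insert u (G.neighborFinset u) ∧ f u v t = 1 := fun t u =>
    if h : t < τ ∧ x u t = 1 then (sol.exists_flow_eq_one h.1 h.2).imp fun _ hv _ _ => hv
    else ⟨u, fun ht hu => absurd ⟨ht, hu⟩ h⟩
  choose step hstep using this
  obtain ⟨q, hq, hqS⟩ := Set.exists_injective_range_eq_of_ncard_eq hS
  exact ⟨_, sol.isPlan_trajectory (fun t ht u hu => hstep t u ht hu) hT hq hqS⟩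

end IsILPSolution

end

theorem rIUMAPF_ilp_iff_general {V : Type*} [Fintype V] [DecidableEq V] (G : SimpleGraph V)
    [DecidableRel G.Adj] (r n τ : ℕ)
    (S T : Set V) (hS : S.ncard = n) (hT : T.ncard = n) :
    (∃ Q : ℕ → Fin n → V, IsPlan G r n τ Q S T) ↔
      ∃ (x : V → ℕ → ℕ) (f : V → V → ℕ → ℕ),
        (∀ v : V, ∀ t ≤ τ, x v t ≤ 1) ∧
        (∀ u v : V, ∀ t < τ, f u v t ≤ 1) ∧
        (∀ v : V, x v 0 = 1 ↔ v ∈ S) ∧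
        (∀ v : V, x v τ = 1 ↔ v ∈ T) ∧
        (∀ u v : V, ∀ t < τ, v ∉ insert u (G.neighborFinset u) → f u v t = 0) ∧
        (∀ t < τ, ∀ u : V, ∑ v ∈ insert u (G.neighborFinset u), f u v t = x u t) ∧
        (∀ t, 1 ≤ t → t ≤ τ → ∀ u : V,
          ∑ v ∈ insert u (G.neighborFinset u), f v u (t - 1) = x u t) ∧
        (∀ t ≤ τ, ∀ u v : V, u ≠ v → G.dist u v ≤ r → x u t + x v t ≤ 1) := by
  constructor
  · rintro ⟨Q, hQ⟩
    obtain ⟨h₁, h₂, h₃, h₄, h₅, h₆, h₇, h₈⟩ := hQ.isILPSolution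
    exact ⟨_, _, h₁, h₂, h₃, h₄, h₅, h₆, h₇, h₈⟩
  · rintro ⟨x, f, h₁, h₂, h₃, h₄, h₅, h₆, h₇, h₈⟩
    exact IsILPSolution.exists_isPlan ⟨h₁, h₂, h₃, h₄, h₅, h₆, h₇, h₈⟩ hS hT

/-- correctness of the ILP formulation of Bounded rIUMAPF: a plan of length
exactly `τ` exists iff there are 0/1 vertex-occupancy variables `x` and flow variables `f`
satisfying the flow-conservation, boundary, and distance-`r` independence constraints. -/
theorem rIUMAPF_ilp_iff {V : Type*} [Fintype V] [DecidableEq V] (G : SimpleGraph V)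
    [DecidableRel G.Adj] (hconn : G.Connected) (r n τ : ℕ)
    (S T : Set V) (hS : S.ncard = n) (hT : T.ncard = n) :
    (∃ Q : ℕ → Fin n → V, IsPlan G r n τ Q S T) ↔
      ∃ (x : V → ℕ → ℕ) (f : V → V → ℕ → ℕ),
        (∀ v : V, ∀ t ≤ τ, x v t ≤ 1) ∧
        (∀ u v : V, ∀ t < τ, f u v t ≤ 1) ∧
        (∀ v : V, x v 0 = 1 ↔ v ∈ S) ∧
        (∀ v : V, x v τ = 1 ↔ v ∈ T) ∧
        (∀ u v : V, ∀ t < τ, v ∉ insert u (G.neighborFinset u) → f u v t = 0) ∧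
        (∀ t < τ, ∀ u : V, ∑ v ∈ insert u (G.neighborFinset u), f u v t = x u t) ∧
        (∀ t, 1 ≤ t → t ≤ τ → ∀ u : V,
          ∑ v ∈ insert u (G.neighborFinset u), f v u (t - 1) = x u t) ∧
        (∀ t ≤ τ, ∀ u v : V, u ≠ v → G.dist u v ≤ r → x u t + x v t ≤ 1) :=
  rIUMAPF_ilp_iff_general G r n τ S T hS hT
end
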